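/- Let 0 < ε' < 1 and let u = (u_j), v = (v_j) be n-tuples of N×N complex matrices such that ∑_j τ_N(u_j*·u_j) = ∑_j τ_N(v_j*·v_j) = n, where τ_N = tr/N is the normalized trace (this holds in particular when all u_j and v_j are unitary). If ‖∑_j u_j ⊗ conj(v_j)‖ ≤ n·ε', then d'(u,v) ≥ √(2n(1−ε')). -/

import Mathlib

open scoped BigOperators Kronecker
open Matrix MeasureTheory

noncomputable section

namespace QE

/-- `N × N` complex matrices. -/
abbrev Mat (N : ℕ) : Type := Matrix (Fin N) (Fin N) ℂ

/-- The unitary group `U(N)`. -/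
abbrev U (N : ℕ) : Type := Matrix.unitaryGroup (Fin N) ℂ

/-- Frobenius (Hilbert-Schmidt) norm of a (possibly rectangular) complex matrix. -/
def frob {p q : ℕ} (ξ : Matrix (Fin p) (Fin q) ℂ) : ℝ :=
  Real.sqrt (∑ i, ∑ j, ‖ξ i j‖ ^ 2)

/-- `opN x y = ‖∑ⱼ xⱼ ⊗ conj (yⱼ)‖`: the operator norm, on `M_N(ℂ)` with the Frobenius
norm, of the linear map `ξ ↦ ∑ⱼ xⱼ ξ yⱼ*`. -/
def opN {n N : ℕ} (x y : Fin n → Mat N) : ℝ :=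
  sSup {r : ℝ | ∃ ξ : Mat N, frob ξ ≤ 1 ∧ r = frob (∑ j, x j * ξ * (y j)ᴴ)}

/-- `‖∑ⱼ xⱼ ⊗ yⱼ‖` (no conjugate on the second leg): equal to the operator norm of
`ξ ↦ ∑ⱼ xⱼ ξ yⱼᵀ`. -/
def tnorm {n N : ℕ} (x y : Fin n → Mat N) : ℝ :=
  opN x fun j => (y j).map (starRingEnd ℂ)

/-- Two `n`-tuples of `N × N` unitaries are `δ`-separated. -/
def Sep {n N : ℕ} (δ : ℝ) (u v : Fin n → U N) : Prop :=
  opN (fun j => (u j : Mat N)) (fun j => (v j : Mat N)) ≤ n * (1 - δ)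

/-- `S_ε(n,N)`: the set of `n`-tuples of `N × N` unitaries with `ε`-spectral gap. -/
def Sgap (ε : ℝ) (n N : ℕ) : Set (Fin n → U N) :=
  {u | ∀ ξ : Mat N, ξ.trace = 0 →
    frob (∑ j, (u j : Mat N) * ξ * ((u j : Mat N))ᴴ) ≤ ε * n * frob ξ}

/-- The distance `d(x,y) = (∑ⱼ ‖xⱼ - yⱼ‖₂²/N)^(1/2)` (normalized trace). -/
def dist2 {n N : ℕ} (x y : Fin n → Mat N) : ℝ :=
  Real.sqrt ((∑ j, frob (x j - y j) ^ 2) / N)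

/-- The two-sided-orbit distance `d'(x,y) = inf {d((a xⱼ b)ⱼ, y) : a, b ∈ U(N)}`. -/
def dist2' {n N : ℕ} (x y : Fin n → Mat N) : ℝ :=
  sInf {r : ℝ | ∃ a b : U N, r = dist2 (fun j => (a : Mat N) * x j * (b : Mat N)) y}

end QE

namespace QE

lemma frob_nonneg {p q : ℕ} (X : Matrix (Fin p) (Fin q) ℂ) : 0 ≤ frob X :=
  Real.sqrt_nonneg _

lemma frob_sq {p q : ℕ} (X : Matrix (Fin p) (Fin q) ℂ) :
    frob X ^ 2 = ∑ i, ∑ j, ‖X i j‖ ^ 2 :=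
  Real.sq_sqrt (by positivity)

section FrobNorm
attribute [local instance] Matrix.frobeniusSeminormedAddCommGroup Matrix.frobeniusNormedSpace

lemma frob_eq_norm {p q : ℕ} (X : Matrix (Fin p) (Fin q) ℂ) : frob X = ‖X‖ := by
  rw [Matrix.frobenius_norm_def, frob, Real.sqrt_eq_rpow]
  congr 1
  refine Finset.sum_congr rfl fun i _ => Finset.sum_congr rfl fun j _ => ?_
  rw [← Real.rpow_natCast ‖X i j‖ 2]
  norm_num

lemma frob_sum_le {p q k : ℕ} (f : Fin k → Matrix (Fin p) (Fin q) ℂ) :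
    frob (∑ j, f j) ≤ ∑ j, frob (f j) := by
  simp only [frob_eq_norm]; exact norm_sum_le _ _

lemma frob_mul_le {p q r : ℕ} (X : Matrix (Fin p) (Fin q) ℂ) (Y : Matrix (Fin q) (Fin r) ℂ) :
    frob (X * Y) ≤ frob X * frob Y := by
  simp only [frob_eq_norm]; exact Matrix.frobenius_norm_mul X Y

lemma frob_smul (c : ℂ) {p q : ℕ} (X : Matrix (Fin p) (Fin q) ℂ) :
    frob (c • X) = ‖c‖ * frob X := by
  simp only [frob_eq_norm]; exact norm_smul c X

end FrobNorm

lemma frob_conjTranspose {p q : ℕ} (X : Matrix (Fin p) (Fin q) ℂ) : frob Xᴴ = frob X := by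
  unfold frob
  congr 1
  rw [Finset.sum_comm]
  simp [Matrix.conjTranspose_apply]

lemma trace_conjT_mul_self {p q : ℕ} (X : Matrix (Fin p) (Fin q) ℂ) :
    (Xᴴ * X).trace = ((frob X ^ 2 : ℝ) : ℂ) := by
  rw [frob_sq, Matrix.trace]
  push_cast
  rw [Finset.sum_comm]
  refine Finset.sum_congr rfl fun i _ => ?_
  simp only [Matrix.diag_apply, Matrix.mul_apply, Matrix.conjTranspose_apply]
  refine Finset.sum_congr rfl fun j _ => ?_
  rw [Complex.star_def, ← Complex.normSq_eq_conj_mul_self, Complex.normSq_eq_norm_sq]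
  push_cast
  ring


lemma norm_trace_le {p q : ℕ} (X Y : Matrix (Fin p) (Fin q) ℂ) :
    ‖(Xᴴ * Y).trace‖ ≤ frob X * frob Y := by
  have h1 : ‖(Xᴴ * Y).trace‖ ≤ ∑ i, ∑ k, ‖X k i‖ * ‖Y k i‖ := by
    rw [Matrix.trace]
    refine (norm_sum_le _ _).trans (Finset.sum_le_sum fun i _ => ?_)
    simp only [Matrix.diag_apply, Matrix.mul_apply, Matrix.conjTranspose_apply]
    refine (norm_sum_le _ _).trans (Finset.sum_le_sum fun k _ => ?_)
    rw [norm_mul, norm_star]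
  refine h1.trans ?_
  have h2 := Real.sum_mul_le_sqrt_mul_sqrt (Finset.univ : Finset (Fin q × Fin p))
      (fun ik => ‖X ik.2 ik.1‖) (fun ik => ‖Y ik.2 ik.1‖)
  have e : ∀ Z : Matrix (Fin p) (Fin q) ℂ,
      Real.sqrt (∑ ik : Fin q × Fin p, ‖Z ik.2 ik.1‖ ^ 2) = frob Z := by
    intro Z
    rw [frob]
    congr 1
    rw [Fintype.sum_prod_type, Finset.sum_comm]
  rw [e X, e Y, Fintype.sum_prod_type] at h2
  exact h2

lemma frob_sub_sq {p q : ℕ} (X Y : Matrix (Fin p) (Fin q) ℂ) :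
    frob (X - Y) ^ 2 = frob X ^ 2 + frob Y ^ 2 - 2 * ((Xᴴ * Y).trace).re := by
  have hm : (X - Y)ᴴ * (X - Y) = Xᴴ * X - Xᴴ * Y - Yᴴ * X + Yᴴ * Y := by
    rw [Matrix.conjTranspose_sub, Matrix.sub_mul, Matrix.mul_sub, Matrix.mul_sub]
    abel
  have e2 : (Yᴴ * X).trace = star ((Xᴴ * Y).trace) := by
    rw [← Matrix.trace_conjTranspose]
    congr 1
    simp [Matrix.conjTranspose_mul]
  have h0 := trace_conjT_mul_self (X - Y)
  rw [hm, Matrix.trace_add, Matrix.trace_sub, Matrix.trace_sub, e2,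
    trace_conjT_mul_self X, trace_conjT_mul_self Y] at h0
  have h1 := congrArg Complex.re h0
  simp only [Complex.add_re, Complex.sub_re, Complex.ofReal_re, Complex.conj_re,
    RCLike.star_def] at h1
  linarith

lemma frob_unitary_conj {N : ℕ} (a b : U N) (X : Mat N) :
    frob ((a : Mat N) * X * (b : Mat N)) = frob X := by
  have ha : (a : Mat N)ᴴ * (a : Mat N) = 1 := by
    simpa [Matrix.star_eq_conjTranspose] using a.2.1
  have hb : (b : Mat N) * (b : Mat N)ᴴ = 1 := by
    simpa [Matrix.star_eq_conjTranspose] using b.2.2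
  have key : ((((a : Mat N) * X * (b : Mat N))ᴴ) * ((a : Mat N) * X * (b : Mat N))).trace
      = (Xᴴ * X).trace := by
    have hm : (((a : Mat N) * X * (b : Mat N))ᴴ) * ((a : Mat N) * X * (b : Mat N))
        = (b : Mat N)ᴴ * (Xᴴ * X) * (b : Mat N) := by
      simp only [Matrix.conjTranspose_mul, Matrix.mul_assoc]
      rw [show (a : Mat N)ᴴ * ((a : Mat N) * (X * (b : Mat N))) = X * (b : Mat N) by
        rw [← Matrix.mul_assoc, ha, one_mul]]
    rw [hm, Matrix.trace_mul_comm, ← Matrix.mul_assoc, hb, one_mul]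
  have h1 := (trace_conjT_mul_self ((a : Mat N) * X * (b : Mat N))).symm.trans
    (key.trans (trace_conjT_mul_self X))
  have h2 : frob ((a : Mat N) * X * (b : Mat N)) ^ 2 = frob X ^ 2 := by exact_mod_cast h1
  have := frob_nonneg ((a : Mat N) * X * (b : Mat N))
  nlinarith [frob_nonneg X]

lemma frob_unitary {N : ℕ} (a : U N) : frob (a : Mat N) = Real.sqrt N := by
  have ha : (a : Mat N)ᴴ * (a : Mat N) = 1 := by
    simpa [Matrix.star_eq_conjTranspose] using a.2.1
  have h1 := trace_conjT_mul_self (a : Mat N)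
  rw [ha, Matrix.trace_one] at h1
  have h2 : frob (a : Mat N) ^ 2 = (N : ℝ) := by
    have := congrArg Complex.re h1
    simp [← Complex.ofReal_pow] at this
    exact_mod_cast this.symm
  rw [← h2, Real.sqrt_sq (frob_nonneg _)]

lemma opN_bddAbove {n N : ℕ} (x y : Fin n → Mat N) :
    BddAbove {r : ℝ | ∃ ξ : Mat N, frob ξ ≤ 1 ∧ r = frob (∑ j, x j * ξ * (y j)ᴴ)} := by
  refine ⟨∑ j, frob (x j) * frob (y j), ?_⟩
  rintro r ⟨ξ, hξ, rfl⟩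
  refine (frob_sum_le _).trans (Finset.sum_le_sum fun j _ => ?_)
  calc frob (x j * ξ * (y j)ᴴ) ≤ frob (x j * ξ) * frob ((y j)ᴴ) := frob_mul_le _ _
    _ ≤ (frob (x j) * frob ξ) * frob (y j) := by
        rw [frob_conjTranspose]
        exact mul_le_mul_of_nonneg_right (frob_mul_le _ _) (frob_nonneg _)
    _ ≤ (frob (x j) * 1) * frob (y j) :=
        mul_le_mul_of_nonneg_right
          (mul_le_mul_of_nonneg_left hξ (frob_nonneg _)) (frob_nonneg _)
    _ = frob (x j) * frob (y j) := by ring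

lemma frob_map_le_opN {n N : ℕ} (x y : Fin n → Mat N) (ξ : Mat N) :
    frob (∑ j, x j * ξ * (y j)ᴴ) ≤ opN x y * frob ξ := by
  rcases eq_or_lt_of_le (frob_nonneg ξ) with h0 | hpos
  · have hs : (∑ i, ∑ j, ‖ξ i j‖ ^ 2) = 0 := by
      have h2 : frob ξ ^ 2 = 0 := by rw [← h0]; ring
      rw [frob_sq] at h2
      exact h2
    have hξ0 : ξ = 0 := by
      ext i j
      have h1 := (Finset.sum_eq_zero_iff_of_nonneg
        (fun i _ => Finset.sum_nonneg fun j _ => sq_nonneg ‖ξ i j‖)).mp hs i (Finset.mem_univ i)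
      have h2 := (Finset.sum_eq_zero_iff_of_nonneg
        (fun j _ => sq_nonneg ‖ξ i j‖)).mp h1 j (Finset.mem_univ j)
      simpa using (pow_eq_zero_iff two_ne_zero).mp h2
    rw [hξ0]
    have hz : frob (0 : Mat N) = 0 := by simp [frob]
    simp only [Matrix.mul_zero, Matrix.zero_mul, Finset.sum_const_zero, hz, mul_zero, le_refl]
  · set c : ℂ := Complex.ofReal ((frob ξ)⁻¹) with hc
    have hnc : ‖c‖ = (frob ξ)⁻¹ := by
      rw [hc, Complex.norm_real, Real.norm_eq_abs, abs_of_nonneg (inv_nonneg.2 (frob_nonneg ξ))]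
    have hmem : frob (∑ j, x j * (c • ξ) * (y j)ᴴ) ∈
        {r : ℝ | ∃ ξ' : Mat N, frob ξ' ≤ 1 ∧ r = frob (∑ j, x j * ξ' * (y j)ᴴ)} := by
      exact ⟨c • ξ, by rw [frob_smul, hnc, inv_mul_cancel₀ (ne_of_gt hpos)], rfl⟩
    have hle := le_csSup (opN_bddAbove x y) hmem
    have he : (∑ j, x j * (c • ξ) * (y j)ᴴ) = c • ∑ j, x j * ξ * (y j)ᴴ := by
      rw [Finset.smul_sum]
      refine Finset.sum_congr rfl fun j _ => ?_
      rw [Matrix.mul_smul, Matrix.smul_mul]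
    rw [he, frob_smul, hnc] at hle
    have h3 := mul_le_mul_of_nonneg_right hle hpos.le
    calc frob (∑ j, x j * ξ * (y j)ᴴ)
        = ((frob ξ)⁻¹ * frob (∑ j, x j * ξ * (y j)ᴴ)) * frob ξ := by
          field_simp
      _ ≤ opN x y * frob ξ := h3

end QE


open QE in
/-- for normalized tuples (`∑ⱼ τ_N(uⱼ*uⱼ) = ∑ⱼ τ_N(vⱼ*vⱼ) = n`),
`‖∑ uⱼ ⊗ conj vⱼ‖ ≤ n ε'` implies `d'(u,v) ≥ √(2n(1-ε'))`. -/
theorem stmt_8 {n N : ℕ} (ε' : ℝ) (hε'0 : 0 < ε') (hε'1 : ε' < 1)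
    (u v : Fin n → Mat N)
    (hu : ∑ j, ((u j)ᴴ * u j).trace / (N : ℂ) = (n : ℂ))
    (hv : ∑ j, ((v j)ᴴ * v j).trace / (N : ℂ) = (n : ℂ))
    (hop : opN u v ≤ n * ε') :
    Real.sqrt (2 * n * (1 - ε')) ≤ dist2' u v := by
  rcases Nat.eq_zero_or_pos N with hN | hNpos
  · subst hN
    have hn : (n : ℂ) = 0 := by
      rw [← hu]
      simp [Matrix.trace]
    have hn0 : n = 0 := by exact_mod_cast hn
    subst hn0
    simp only [Nat.cast_zero, mul_zero, zero_mul, Real.sqrt_zero]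
    apply Real.sInf_nonneg
    rintro r ⟨a, b, rfl⟩
    exact Real.sqrt_nonneg _
  · have hNR : (0:ℝ) < N := by exact_mod_cast hNpos
    have hNC : (N:ℂ) ≠ 0 := by
      simpa using (Nat.cast_ne_zero (R := ℂ)).2 hNpos.ne'
    have hsum : ∀ w : Fin n → Mat N, (∑ j, ((w j)ᴴ * w j).trace / (N : ℂ) = (n : ℂ)) →
        ∑ j, frob (w j) ^ 2 = n * N := by
      intro w hw
      rw [← Finset.sum_div, div_eq_iff hNC] at hw
      have h1 : ∑ j, ((frob (w j) ^ 2 : ℝ) : ℂ) = (n : ℂ) * N := by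
        rw [← hw]
        exact Finset.sum_congr rfl fun j _ => (trace_conjT_mul_self (w j)).symm
      exact_mod_cast h1
    have hu2 := hsum u hu
    have hv2 := hsum v hv
    apply le_csInf
    · exact ⟨_, 1, 1, rfl⟩
    rintro r ⟨a, b, rfl⟩
    set x : Fin n → Mat N := fun j => (a : Mat N) * u j * (b : Mat N) with hx
    set M : Mat N := ∑ j, u j * (b : Mat N) * (v j)ᴴ with hM
    -- trace sum identity
    have htr : ∑ j, ((x j)ᴴ * v j).trace.re = ((a : Mat N) * M).trace.re := by
      have h1 : ∀ j, ((x j)ᴴ * v j).trace = star (((v j)ᴴ * x j).trace) := by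
        intro j
        rw [← Matrix.trace_conjTranspose]
        congr 1
        simp [Matrix.conjTranspose_mul, Matrix.mul_assoc]
      have h2 : ∑ j, ((v j)ᴴ * x j).trace = ((a : Mat N) * M).trace := by
        rw [hM, Matrix.mul_sum, Matrix.trace_sum]
        refine Finset.sum_congr rfl fun j _ => ?_
        rw [hx, Matrix.trace_mul_comm]
        congr 1
        simp [Matrix.mul_assoc]
      calc ∑ j, ((x j)ᴴ * v j).trace.re = ∑ j, ((v j)ᴴ * x j).trace.re := by
            refine Finset.sum_congr rfl fun j _ => ?_
            rw [h1 j, Complex.star_def, Complex.conj_re]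
        _ = ((a : Mat N) * M).trace.re := by
            rw [← Complex.re_sum]  -- check name
            rw [h2]
    -- bound on the trace
    have hMb : frob M ≤ (n * ε') * Real.sqrt N := by
      have h1 : frob M ≤ opN u v * frob (b : Mat N) := frob_map_le_opN u v (b : Mat N)
      rw [frob_unitary b] at h1
      exact h1.trans (mul_le_mul_of_nonneg_right hop (Real.sqrt_nonneg _))
    have hTb : ‖((a : Mat N) * M).trace‖ ≤ n * ε' * N := by
      have h1 := norm_trace_le ((a : Mat N)ᴴ) M
      rw [Matrix.conjTranspose_conjTranspose, frob_conjTranspose, frob_unitary a] at h1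
      calc ‖((a : Mat N) * M).trace‖ ≤ Real.sqrt N * frob M := h1
        _ ≤ Real.sqrt N * ((n * ε') * Real.sqrt N) :=
            mul_le_mul_of_nonneg_left hMb (Real.sqrt_nonneg _)
        _ = (Real.sqrt N * Real.sqrt N) * (n * ε') := by ring
        _ = n * ε' * N := by rw [Real.mul_self_sqrt hNR.le]; ring
    have hre : ((a : Mat N) * M).trace.re ≤ n * ε' * N := by
      refine (Complex.re_le_norm _).trans ?_
      exact hTb
    -- sum of squares
    have hs : (2 * n * (1 - ε')) * N ≤ ∑ j, frob (x j - v j) ^ 2 := by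
      have h1 : ∑ j, frob (x j - v j) ^ 2
          = ∑ j, frob (u j) ^ 2 + ∑ j, frob (v j) ^ 2
            - 2 * ∑ j, ((x j)ᴴ * v j).trace.re := by
        calc ∑ j, frob (x j - v j) ^ 2
            = ∑ j, (frob (u j) ^ 2 + frob (v j) ^ 2 - 2 * ((x j)ᴴ * v j).trace.re) := by
              refine Finset.sum_congr rfl fun j _ => ?_
              rw [frob_sub_sq, show frob (x j) = frob (u j) from frob_unitary_conj a b (u j)]
          _ = _ := by
              rw [Finset.sum_sub_distrib, Finset.sum_add_distrib, ← Finset.mul_sum]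
      rw [h1, hu2, hv2, htr]
      nlinarith [hre, hNR]
    -- conclude
    show Real.sqrt (2 * n * (1 - ε')) ≤ dist2 x v
    rw [dist2]
    apply Real.sqrt_le_sqrt
    rw [le_div_iff₀ hNR]
    exact hs
end
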